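/- For 0 < a < 1, for every x ∈ [1, ∞), C_a^n(x) → 1 as n → ∞; hence [1, ∞) is contained in the real basin of attraction of the fixed point 1. -/

import Mathlib

/-!
For `x > 1` all of `p = p_a`, `p'`, `p''` are positive, so the Chebyshev step
`C_a(x) = x - (p/p')(1 + p p''/(2 p'²))` moves `x` strictly down; on the other hand
`C_a(x) - 1 = (x - 1)³ · Q(x) / p'(x)³` with `Q > 0` on `[1, ∞)`, so `C_a` keeps `[1, ∞)`
invariant. An orbit starting in `[1, ∞)` is therefore decreasing and bounded below by `1`; its
limit is a fixed point of `C_a` in `[1, ∞)`, and the only one is `1`.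
-/

open Set Filter Topology Function

noncomputable def CaR (a : ℝ) (x : ℝ) : ℝ :=
  (42 * x ^ 10 + (-51 * (a + 1)) * x ^ 8 + (4 * (5 * a ^ 2 + 3 * a + 5)) * x ^ 6
      + (-3 * (a ^ 3 - 7 * a ^ 2 - 7 * a + 1)) * x ^ 4
      + (-6 * a * (a ^ 2 + 3 * a + 1)) * x ^ 2 + a ^ 2 * (a + 1))
    / (8 * x ^ 3 * (2 * x ^ 2 - (a + 1)) ^ 3)

theorem tendsto_iterate_of_lt_self {α : Type*} [ConditionallyCompleteLinearOrder α]
    [TopologicalSpace α] [OrderTopology α] {f : α → α} {c x : α}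
    (hmaps : MapsTo f (Ici c) (Ici c)) (hfix : f c = c) (hlt : ∀ y ∈ Ioi c, f y < y)
    (hcont : ContinuousOn f (Ioi c)) (hx : c ≤ x) :
    Tendsto (fun n => f^[n] x) atTop (𝓝 c) := by
  have hmem : ∀ n, c ≤ f^[n] x := fun n => hmaps.iterate n hx
  have hanti : Antitone fun n => f^[n] x := by
    refine antitone_nat_of_succ_le fun n => ?_
    rw [iterate_succ_apply']
    rcases (hmem n).eq_or_lt with h | h
    · rw [← h, hfix]
    · exact (hlt _ h).le
  have hlim := tendsto_atTop_ciInf hanti ⟨c, forall_mem_range.2 hmem⟩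
  set L := ⨅ n, f^[n] x
  rcases (ge_of_tendsto' hlim hmem).eq_or_lt with hL | hL
  · rwa [← hL] at hlim
  · have : f L = L := isFixedPt_of_tendsto_iterate hlim (hcont.continuousAt (Ioi_mem_nhds hL))
    exact absurd this (hlt L hL).ne

section Chebyshev

variable {a x : ℝ}

/-- `p_a(x) = (x² - 1)(x² - a)` and its first two derivatives. -/
def quartic (a x : ℝ) : ℝ := (x ^ 2 - 1) * (x ^ 2 - a)

def quartic' (a x : ℝ) : ℝ := 2 * x * (2 * x ^ 2 - (a + 1))

def quartic'' (a x : ℝ) : ℝ := 12 * x ^ 2 - 2 * (a + 1)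

theorem quartic'_pow_three : quartic' a x ^ 3 = 8 * x ^ 3 * (2 * x ^ 2 - (a + 1)) ^ 3 := by
  rw [quartic']; ring

theorem quartic'_pos (ha : a < 1) (hx : 1 ≤ x) : 0 < quartic' a x := by
  have : 0 < 2 * x ^ 2 - (a + 1) := by nlinarith
  rw [quartic']
  positivity

theorem CaR_eq_chebyshev (h : quartic' a x ≠ 0) :
    CaR a x = x - quartic a x / quartic' a x
      * (1 + quartic a x * quartic'' a x / (2 * quartic' a x ^ 2)) := by
  rw [CaR, ← quartic'_pow_three]
  field_simp
  rw [quartic, quartic', quartic'']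
  ring

/-- The factor `(x - 1) ^ 3` reflects the cubic convergence of Chebyshev's method at the
simple root `1`. -/
theorem CaR_sub_one (h : quartic' a x ≠ 0) :
    CaR a x - 1 = (x - 1) ^ 3 * ((x + 1) * (x ^ 2 - a)
        * (15 * x ^ 4 + 20 * x ^ 3 + (7 - 9 * a) * x ^ 2 - 4 * a * x + 2 * a ^ 2 + a)
      + (x - 1) * (3 * x ^ 2 + 2 * x - a) ^ 3) / quartic' a x ^ 3 := by
  rw [CaR, ← quartic'_pow_three]
  field_simp
  rw [quartic']
  ring

theorem CaR_one (ha : a < 1) : CaR a 1 = 1 := by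
  have := CaR_sub_one (quartic'_pos ha le_rfl).ne'
  rwa [sub_self, zero_pow three_ne_zero, zero_mul, zero_div, sub_eq_zero] at this

theorem one_le_CaR (ha : a < 1) (hx : 1 ≤ x) : 1 ≤ CaR a x := by
  have hp' := quartic'_pos ha hx
  have hx1 : 0 ≤ x - 1 := by linarith
  have hq : 0 ≤ (x + 1) * (x ^ 2 - a) := mul_nonneg (by linarith) (by nlinarith)
  have hS : 0 ≤ 15 * x ^ 4 + 20 * x ^ 3 + (7 - 9 * a) * x ^ 2 - 4 * a * x + 2 * a ^ 2 + a := by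
    nlinarith [sq_nonneg (a + 1 / 4)]
  have hr : 0 ≤ 3 * x ^ 2 + 2 * x - a := by nlinarith
  rw [← sub_nonneg, CaR_sub_one hp'.ne']
  positivity

theorem CaR_lt_self (ha : a < 1) (hx : 1 < x) : CaR a x < x := by
  have hp' := quartic'_pos ha hx.le
  have hp : 0 < quartic a x := mul_pos (by nlinarith) (by nlinarith)
  have hp'' : 0 < quartic'' a x := by rw [quartic'']; nlinarith
  rw [CaR_eq_chebyshev hp'.ne', sub_lt_self_iff]
  positivity

theorem continuousOn_CaR (ha : a < 1) : ContinuousOn (CaR a) (Ioi 1) := by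
  refine ContinuousOn.div (by fun_prop) (by fun_prop) fun y hy => ?_
  rw [← quartic'_pow_three]
  exact pow_ne_zero 3 (quartic'_pos ha (le_of_lt hy)).ne'

end Chebyshev

theorem stmt15_general (a : ℝ) (ha1 : a < 1) (x : ℝ) (hx : 1 ≤ x) :
    Filter.Tendsto (fun n : ℕ => (CaR a)^[n] x) Filter.atTop (nhds 1) :=
  tendsto_iterate_of_lt_self (fun _ hy => one_le_CaR ha1 hy) (CaR_one ha1)
    (fun _ hy => CaR_lt_self ha1 hy) (continuousOn_CaR ha1) hx

/-- For `0 < a < 1`, every `x ∈ [1,∞)` converges to `1` under iteration of `C_a`. -/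
theorem stmt15 (a : ℝ) (ha0 : 0 < a) (ha1 : a < 1) (x : ℝ) (hx : 1 ≤ x) :
    Filter.Tendsto (fun n : ℕ => (CaR a)^[n] x) Filter.atTop (nhds 1) :=
  stmt15_general a ha1 x hx
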